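/- arXiv:2104.10977 — 4 statements merged into one kernel-verified Lean document; each statement's English description precedes it below -/
import Mathlib

section
/- Let A ≥ 0 and B > 0 be real numbers. Then for every t ≥ 0, ln(1+t) − t + (1+t)·A/(A+B) ≤ ln(1 + A/B), with equality if and only if t = A/B. In particular, the function t ↦ ln(1+t) − t + (1+t)·A/(A+B) on [0,∞) attains its maximum value ln(1 + A/B) uniquely at t = A/B. -/
/-!
With `x = (1 + t) B / (A + B)` the gap `ln(1 + A/B) − (ln(1+t) − t + (1+t) A/(A+B))` equals
`(x − 1) − ln x`, so everything follows from `ln x ≤ x − 1`, with equality only at `x = 1`,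
i.e. at `t = A/B`.
-/

open Real

theorem Real.log_eq_sub_one_iff {x : ℝ} (hx : 0 < x) : log x = x - 1 ↔ x = 1 := by
  refine ⟨fun h => ?_, fun h => by simp [h]⟩
  by_contra hne
  exact (log_lt_sub_one_of_pos hx hne).ne h

section DualTransform

variable {A B t : ℝ}

theorem log_one_add_sub_add_mul_div_eq (hB : 0 < B) (hAB : 0 < A + B) (ht : 0 < 1 + t) :
    log (1 + t) - t + (1 + t) * A / (A + B) =
      log (1 + A / B) + (log ((1 + t) * B / (A + B)) - ((1 + t) * B / (A + B) - 1)) := by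
  have hlog : log ((1 + t) * B / (A + B)) = log (1 + t) - log (1 + A / B) := by
    rw [one_add_div hB.ne', add_comm B A, log_div hAB.ne' hB.ne',
      log_div (mul_pos ht hB).ne' hAB.ne', log_mul ht.ne' hB.ne']
    ring
  rw [hlog]
  field_simp
  ring

theorem mul_div_add_eq_one_iff (hB : 0 < B) (hAB : 0 < A + B) :
    (1 + t) * B / (A + B) = 1 ↔ t = A / B := by
  rw [div_eq_one_iff_eq hAB.ne', eq_div_iff hB.ne']
  constructor <;> intro h <;> linarith

end DualTransform

/-- Pointwise Lagrangian dual transform: for `A ≥ 0`, `B > 0` and `t ≥ 0`,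
`ln(1+t) − t + (1+t)·A/(A+B) ≤ ln(1 + A/B)`, with equality iff `t = A/B`. -/
theorem lagrangian_dual_pointwise (A B : ℝ) (hA : 0 ≤ A) (hB : 0 < B)
    (t : ℝ) (ht : 0 ≤ t) :
    (Real.log (1 + t) - t + (1 + t) * A / (A + B) ≤ Real.log (1 + A / B)) ∧
      (Real.log (1 + t) - t + (1 + t) * A / (A + B) = Real.log (1 + A / B) ↔ t = A / B) := by
  have hAB : 0 < A + B := by linarith
  have ht' : 0 < 1 + t := by linarith
  have hx : 0 < (1 + t) * B / (A + B) := by positivity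
  rw [log_one_add_sub_add_mul_div_eq hB hAB ht', ← mul_div_add_eq_one_iff hB hAB,
    ← log_eq_sub_one_iff hx]
  constructor
  · linarith [log_le_sub_one_of_pos hx]
  · constructor <;> intro h <;> linarith
end

section
/- Let X be a nonempty set, K a positive integer, ω_1,…,ω_K ≥ 0, A_k : X → ℝ with A_k(x) ≥ 0 for all x, and B_k : X → ℝ with B_k(x) > 0 for all x. Then sup_{x ∈ X} Σ_{k=1}^K ω_k ln(1 + A_k(x)/B_k(x)) = sup_{x ∈ X, t ∈ [0,∞)^K} Σ_{k=1}^K ω_k ( ln(1 + t_k) − t_k + (1 + t_k)·A_k(x)/(A_k(x) + B_k(x)) ), where both suprema are taken in the extended real numbers. -/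
open scoped BigOperators

lemma key_ineq (a b t : ℝ) (ha : 0 ≤ a) (hb : 0 < b) (ht : 0 ≤ t) :
    Real.log (1 + t) - t + (1 + t) * a / (a + b) ≤ Real.log (1 + a / b) := by
  have hab : 0 < a + b := by linarith
  have h1a : 0 < 1 + a / b := by positivity
  have h1t : 0 < 1 + t := by linarith
  have hlog : Real.log ((1 + t) / (1 + a / b)) ≤ (1 + t) / (1 + a / b) - 1 :=
    Real.log_le_sub_one_of_pos (by positivity)
  rw [Real.log_div (by positivity) (by positivity)] at hlog
  have key : (1 + t) / (1 + a / b) - 1 = t - (1 + t) * a / (a + b) := by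
    field_simp
    ring
  rw [key] at hlog
  linarith

lemma key_eq (a b : ℝ) (ha : 0 ≤ a) (hb : 0 < b) :
    Real.log (1 + a / b) =
      Real.log (1 + a / b) - a / b + (1 + a / b) * a / (a + b) := by
  have hab : 0 < a + b := by linarith
  have : (1 + a / b) * a / (a + b) = a / b := by
    field_simp
    ring
  rw [this]
  ring

/-- Lagrangian dual transform: the supremum of the sum-of-logarithmic-ratios objective
equals the supremum of its Lagrangian dual over the auxiliary variables `t ∈ [0,∞)^K`. -/
theorem lagrangian_dual_transform
    (X : Type*) [Nonempty X] (K : ℕ) (hK : 0 < K)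
    (ω : Fin K → ℝ) (hω : ∀ k, 0 ≤ ω k)
    (A B : Fin K → X → ℝ) (hA : ∀ k x, 0 ≤ A k x) (hB : ∀ k x, 0 < B k x) :
    (⨆ x : X, ((∑ k, ω k * Real.log (1 + A k x / B k x) : ℝ) : EReal))
      =
    (⨆ p : X × {t : Fin K → ℝ // ∀ k, 0 ≤ t k},
        ((∑ k, ω k * (Real.log (1 + p.2.1 k) - p.2.1 k
            + (1 + p.2.1 k) * A k p.1 / (A k p.1 + B k p.1)) : ℝ) : EReal)) := by
  apply le_antisymm
  · apply iSup_le
    intro x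
    have ht : ∀ k, 0 ≤ A k x / B k x := fun k => div_nonneg (hA k x) (hB k x).le
    have h := le_iSup (fun p : X × {t : Fin K → ℝ // ∀ k, 0 ≤ t k} =>
        ((∑ k, ω k * (Real.log (1 + p.2.1 k) - p.2.1 k
            + (1 + p.2.1 k) * A k p.1 / (A k p.1 + B k p.1)) : ℝ) : EReal))
        (⟨x, ⟨fun k => A k x / B k x, ht⟩⟩ : X × {t : Fin K → ℝ // ∀ k, 0 ≤ t k})
    refine le_trans (le_of_eq ?_) h
    norm_cast
    apply Finset.sum_congr rfl
    intro k _
    rw [← key_eq (A k x) (B k x) (hA k x) (hB k x)]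
  · apply iSup_le
    rintro ⟨x, t, ht⟩
    refine le_trans ?_ (le_iSup _ x)
    norm_cast
    apply Finset.sum_le_sum
    intro k _
    exact mul_le_mul_of_nonneg_left
      (key_ineq (A k x) (B k x) (t k) (hA k x) (hB k x) (ht k)) (hω k)
end

section
/- Let X be a nonempty set, K a positive integer, C_k : X → ℂ, and D_k : X → ℝ with D_k(x) > 0 for all x. Then sup_{x ∈ X} Σ_{k=1}^K |C_k(x)|² / D_k(x) = sup_{x ∈ X, β ∈ ℂ^K} Σ_{k=1}^K ( 2·Re(conj(β_k)·C_k(x)) − |β_k|²·D_k(x) ), where both suprema are taken in the extended real numbers. -/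
/-! For fixed `x`, each summand `2 Re(conj β_k C_k) - |β_k|² D_k` is a concave quadratic in `β_k`
with maximum `|C_k|² / D_k`, attained at `β_k = C_k / D_k`; so the supremum over `β` recovers the
ratio objective pointwise, and the two suprema over `x` agree. Since `Re(conj β C)` is the real
inner product on `ℂ`, the argument works in any real inner product space. -/

open scoped RealInnerProductSpace

section QuadraticTransform

variable {F : Type*} [NormedAddCommGroup F] [InnerProductSpace ℝ F]

/-- Completing the square: the gap is `‖c - d • β‖ ^ 2 / d`. -/
theorem two_inner_sub_norm_sq_mul_le_norm_sq_div (β c : F) {d : ℝ} (hd : 0 < d) :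
    2 * ⟪β, c⟫ - ‖β‖ ^ 2 * d ≤ ‖c‖ ^ 2 / d := by
  have hsq := sq_nonneg ‖c - d • β‖
  rw [norm_sub_sq_real, real_inner_smul_right, norm_smul, mul_pow, Real.norm_eq_abs, sq_abs,
    real_inner_comm] at hsq
  rw [le_div_iff₀ hd]
  nlinarith

theorem two_inner_inv_smul_sub_norm_sq_mul (c : F) (d : ℝ) :
    2 * ⟪d⁻¹ • c, c⟫ - ‖d⁻¹ • c‖ ^ 2 * d = ‖c‖ ^ 2 / d := by
  rw [real_inner_smul_left, real_inner_self_eq_norm_sq, norm_smul, mul_pow, Real.norm_eq_abs,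
    sq_abs]
  rcases eq_or_ne d 0 with rfl | hd
  · simp
  · field_simp
    ring

theorem iSup_sum_two_inner_sub_norm_sq_mul {ι : Type*} [Fintype ι] (c : ι → F) (d : ι → ℝ)
    (hd : ∀ i, 0 < d i) :
    ⨆ β : ι → F, ((∑ i, (2 * ⟪β i, c i⟫ - ‖β i‖ ^ 2 * d i) : ℝ) : EReal)
      = ((∑ i, ‖c i‖ ^ 2 / d i : ℝ) : EReal) := by
  refine le_antisymm (iSup_le fun β => ?_) (le_iSup_of_le (fun i => (d i)⁻¹ • c i) ?_)
  · exact EReal.coe_le_coe_iff.mpr <| Finset.sum_le_sum fun i _ =>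
      two_inner_sub_norm_sq_mul_le_norm_sq_div (β i) (c i) (hd i)
  · simp only [two_inner_inv_smul_sub_norm_sq_mul, le_refl]

end QuadraticTransform

theorem quadratic_transform_general
    (X : Type*) (K : ℕ)
    (C : Fin K → X → ℂ) (D : Fin K → X → ℝ) (hD : ∀ k x, 0 < D k x) :
    (⨆ x : X, ((∑ k, ‖C k x‖ ^ 2 / D k x : ℝ) : EReal))
      =
    (⨆ p : X × (Fin K → ℂ),
        ((∑ k, (2 * ((starRingEnd ℂ) (p.2 k) * C k p.1).re
            - ‖p.2 k‖ ^ 2 * D k p.1) : ℝ) : EReal)) := by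
  rw [iSup_prod]
  refine iSup_congr fun x => ?_
  simp only [mul_comm (starRingEnd ℂ _), ← Complex.inner]
  exact (iSup_sum_two_inner_sub_norm_sq_mul (fun k => C k x) (fun k => D k x) (hD · x)).symm

/-- Quadratic transform: the supremum of the multiple-ratio objective equals the supremum
of its quadratic transform over the auxiliary variables `β ∈ ℂ^K`. -/
theorem quadratic_transform
    (X : Type*) [Nonempty X] (K : ℕ) (hK : 0 < K)
    (C : Fin K → X → ℂ) (D : Fin K → X → ℝ) (hD : ∀ k x, 0 < D k x) :
    (⨆ x : X, ((∑ k, ‖C k x‖ ^ 2 / D k x : ℝ) : EReal))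
      =
    (⨆ p : X × (Fin K → ℂ),
        ((∑ k, (2 * ((starRingEnd ℂ) (p.2 k) * C k p.1).re
            - ‖p.2 k‖ ^ 2 * D k p.1) : ℝ) : EReal)) :=
  quadratic_transform_general X K C D hD
end

section
/- Let c ∈ ℂ and B > 0 be a real number. Then ln(1 + |c|²/B) = sup over t ≥ 0 and β ∈ ℂ of [ ln(1+t) − t + 2·√(1+t)·Re(conj(β)·c) − |β|²·(|c|² + B) ], and the supremum is attained at t = |c|²/B and β = √(1+t)·c/(|c|² + B). -/
/-!
Write `x = ‖c‖² / B`. For fixed `t`, the `β`-part `2√(1+t) Re(conj β c) - ‖β‖² (‖c‖² + B)` is a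
concave quadratic whose maximum, found by completing the square, is
`(1+t) ‖c‖² / (‖c‖² + B) = (1+t) x / (1+x)`. What remains is `log (1+t) - t + (1+t) x / (1+x)`,
which is at most `log (1+x)` by `log y ≤ y - 1` at `y = (1+t)/(1+x)`, with equality at `t = x`.
-/

open Real ComplexConjugate

theorem two_mul_inner_sub_norm_sq_mul_le {E : Type*} [NormedAddCommGroup E]
    [InnerProductSpace ℝ E] (u : ℝ) {M : ℝ} (hM : 0 < M) (b c : E) :
    2 * u * inner ℝ b c - ‖b‖ ^ 2 * M ≤ u ^ 2 * (‖c‖ ^ 2 / M) := by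
  have hsq : 0 ≤ ‖M • b - u • c‖ ^ 2 := sq_nonneg _
  rw [norm_sub_sq_real, real_inner_smul_left, real_inner_smul_right, norm_smul, norm_smul,
    Real.norm_eq_abs, Real.norm_eq_abs, mul_pow, mul_pow, sq_abs, sq_abs] at hsq
  rw [mul_div_assoc', le_div_iff₀ hM]
  nlinarith

theorem two_mul_inner_sub_norm_sq_mul_of_eq_smul {E : Type*} [NormedAddCommGroup E]
    [InnerProductSpace ℝ E] (u : ℝ) {M : ℝ} (hM : 0 < M) (c : E) :
    2 * u * inner ℝ ((u / M) • c) c - ‖(u / M) • c‖ ^ 2 * M = u ^ 2 * (‖c‖ ^ 2 / M) := by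
  rw [real_inner_smul_left, real_inner_self_eq_norm_sq, norm_smul, Real.norm_eq_abs, mul_pow,
    sq_abs]
  field_simp
  ring

theorem log_one_add_sub_add_mul_le {t x : ℝ} (ht : -1 < t) (hx : -1 < x) :
    log (1 + t) - t + (1 + t) * (x / (1 + x)) ≤ log (1 + x) := by
  have ht' : 0 < 1 + t := by linarith
  have hx' : 0 < 1 + x := by linarith
  have hlog := log_le_sub_one_of_pos (div_pos ht' hx')
  rw [log_div ht'.ne' hx'.ne'] at hlog
  have hratio : (1 + t) / (1 + x) - 1 = t - (1 + t) * (x / (1 + x)) := by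
    field_simp
    ring
  linarith

theorem EReal.coe_eq_iSup_of_le_of_eq {ι : Type*} {f : ι → ℝ} {a : ℝ} (hle : ∀ i, f i ≤ a)
    (i₀ : ι) (heq : f i₀ = a) : (a : EReal) = ⨆ i, (f i : EReal) :=
  le_antisymm (le_iSup_of_le i₀ (heq ▸ le_rfl))
    (iSup_le fun i => EReal.coe_le_coe_iff.mpr (hle i))

theorem Complex.re_conj_mul_eq_inner (β c : ℂ) : (conj β * c).re = inner ℝ β c := by
  rw [Complex.inner, mul_comm]

theorem div_add_eq_div_div_one_add {K : Type*} [Field K] {a b : K} (hb : b ≠ 0) :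
    a / (a + b) = a / b / (1 + a / b) := by
  rw [one_add_div hb, div_div_div_cancel_right₀ hb, add_comm]

noncomputable def rateObjective (c : ℂ) (B t : ℝ) (β : ℂ) : ℝ :=
  log (1 + t) - t + 2 * √(1 + t) * (conj β * c).re - ‖β‖ ^ 2 * (‖c‖ ^ 2 + B)

section RateObjective

variable (c : ℂ) {B : ℝ}

theorem rateObjective_le (hB : 0 < B) {t : ℝ} (ht : 0 ≤ t) (β : ℂ) :
    rateObjective c B t β ≤ log (1 + ‖c‖ ^ 2 / B) := by
  have hM : 0 < ‖c‖ ^ 2 + B := by positivity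
  have hquad := two_mul_inner_sub_norm_sq_mul_le √(1 + t) hM β c
  rw [sq_sqrt (by linarith)] at hquad
  have hx : 0 ≤ ‖c‖ ^ 2 / B := by positivity
  have hdual := log_one_add_sub_add_mul_le (t := t) (x := ‖c‖ ^ 2 / B) (by linarith)
    (by linarith)
  rw [← div_add_eq_div_div_one_add hB.ne'] at hdual
  rw [rateObjective, Complex.re_conj_mul_eq_inner]
  linarith

theorem rateObjective_optimal (hB : 0 < B) :
    rateObjective c B (‖c‖ ^ 2 / B)
        ((√(1 + ‖c‖ ^ 2 / B) : ℂ) * c / ((‖c‖ ^ 2 + B : ℝ) : ℂ)) =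
      log (1 + ‖c‖ ^ 2 / B) := by
  have hM : 0 < ‖c‖ ^ 2 + B := by positivity
  set u := √(1 + ‖c‖ ^ 2 / B)
  have hβ : (u : ℂ) * c / ((‖c‖ ^ 2 + B : ℝ) : ℂ) = (u / (‖c‖ ^ 2 + B)) • c := by
    rw [Complex.real_smul]
    push_cast
    ring
  have hquad := two_mul_inner_sub_norm_sq_mul_of_eq_smul u hM c
  rw [sq_sqrt (by positivity), div_add_eq_div_div_one_add hB.ne'] at hquad
  rw [rateObjective, hβ, Complex.re_conj_mul_eq_inner, add_sub_assoc, hquad]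
  field_simp
  ring

end RateObjective

/-- Combined Lagrangian-dual and quadratic transform of a single rate term:
`ln(1 + |c|²/B)` equals the supremum over `t ≥ 0` and `β ∈ ℂ` of
`ln(1+t) − t + 2√(1+t)·Re(conj(β)·c) − |β|²(|c|² + B)`, and the supremum is attained
at `t = |c|²/B`, `β = √(1+t)·c/(|c|² + B)`. -/
theorem single_term_joint_transform (c : ℂ) (B : ℝ) (hB : 0 < B) :
    (((Real.log (1 + ‖c‖ ^ 2 / B) : ℝ) : EReal) =
      ⨆ p : {t : ℝ // 0 ≤ t} × ℂ,
        ((Real.log (1 + p.1.1) - p.1.1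
            + 2 * Real.sqrt (1 + p.1.1) * ((starRingEnd ℂ) p.2 * c).re
            - ‖p.2‖ ^ 2 * (‖c‖ ^ 2 + B) : ℝ) : EReal))
    ∧
    (Real.log (1 + ‖c‖ ^ 2 / B) =
      Real.log (1 + ‖c‖ ^ 2 / B) - ‖c‖ ^ 2 / B
        + 2 * Real.sqrt (1 + ‖c‖ ^ 2 / B) *
            ((starRingEnd ℂ)
                ((Real.sqrt (1 + ‖c‖ ^ 2 / B) : ℂ) * c /
                  ((‖c‖ ^ 2 + B : ℝ) : ℂ)) * c).re
        - ‖(Real.sqrt (1 + ‖c‖ ^ 2 / B) : ℂ) * c /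
              ((‖c‖ ^ 2 + B : ℝ) : ℂ)‖ ^ 2 * (‖c‖ ^ 2 + B)) := by
  have hopt := rateObjective_optimal c hB
  refine ⟨?_, hopt.symm⟩
  exact EReal.coe_eq_iSup_of_le_of_eq (fun p => rateObjective_le c hB p.1.2 p.2)
    (⟨⟨‖c‖ ^ 2 / B, by positivity⟩, _⟩) hopt
end
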